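/- In the example, for every T > 0 one has v_T(b_s) ≥ 1/2 for all s > 0, with equality attained at s = 2/T; consequently inf_{s>0} v_T(b_s) = 1/2 and V[v_T](0,0,0) = 1/2 for all T > 0. -/

import Mathlib

open MeasureTheory Set Filter Topology

noncomputable section

/-- Concatenation `z ⋄_h z'` of two processes at time `h`:
`(z ⋄_h z')(t) = z(t)` for `t < h` and `(z ⋄_h z')(t) = z'(t - h)` for `t ≥ h`. -/
def concat {Ω : Type*} (z z' : ℝ → Ω) (h : ℝ) : ℝ → Ω :=
  fun t => if t < h then z t else z' (t - h)

/-- The time average `v_T(z) = (1/T) ∫₀^T g(z(t)) dt`. -/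
def timeAvg {Ω : Type*} (g : Ω → ℝ) (T : ℝ) (z : ℝ → Ω) : ℝ :=
  (1 / T) * ∫ t in Ioc (0 : ℝ) T, g (z t)

/-- The discounted average `w_λ(z) = λ ∫₀^∞ e^{-λ t} g(z(t)) dt`. -/
def discAvg {Ω : Type*} (g : Ω → ℝ) (lam : ℝ) (z : ℝ → Ω) : ℝ :=
  lam * ∫ t in Ioi (0 : ℝ), Real.exp (-lam * t) * g (z t)

/-- The value function `V[J](ω) = inf { J(z) : z ∈ K, z(0) = ω }`. -/
def Val {Ω : Type*} (K : Set (ℝ → Ω)) (J : (ℝ → Ω) → ℝ) (ω : Ω) : ℝ :=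
  sInf (J '' {z ∈ K | z 0 = ω})

/-- The state space `Ω = ℝ_{≥0} × ℝ_{≥0} × ℝ_{≥0}` of the example,
realized as a subset of `ℝ × ℝ × ℝ`. -/
def Omega3 : Set (ℝ × ℝ × ℝ) := {p | 0 ≤ p.1 ∧ 0 ≤ p.2.1 ∧ 0 ≤ p.2.2}

/-- The running cost of the example: `g(x,y,r) = 0` if `x ∈ [1,2]` and `r = 0`,
and `g(x,y,r) = 1` otherwise. -/
def gex : ℝ × ℝ × ℝ → ℝ := fun p => if p.1 ∈ Icc (1 : ℝ) 2 ∧ p.2.2 = 0 then 0 else 1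

/-- The process `a_ω(t) = (x, y, t + r)` for `ω = (x, y, r)`. -/
def aproc (ω : ℝ × ℝ × ℝ) : ℝ → ℝ × ℝ × ℝ := fun t => (ω.1, ω.2.1, t + ω.2.2)

/-- The process `b_s(t) = (s t, t, 0)`. -/
def bproc (s : ℝ) : ℝ → ℝ × ℝ × ℝ := fun t => (s * t, t, 0)

/-- The set `K` of feasible processes of the example:
`K = {a_ω : ω ∈ Ω} ∪ {b_s : s ≥ 0} ∪ {b_s ⋄_τ a_{b_s(τ)} : s ≥ 0, τ > 0}`. -/
def Kex : Set (ℝ → ℝ × ℝ × ℝ) :=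
  {z | ∃ ω ∈ Omega3, z = aproc ω} ∪ {z | ∃ s : ℝ, 0 ≤ s ∧ z = bproc s} ∪
    {z | ∃ s : ℝ, 0 ≤ s ∧ ∃ τ : ℝ, 0 < τ ∧ z = concat (bproc s) (aproc (bproc s τ)) τ}

/-!
Along `b_s` the cost vanishes exactly while `s t ∈ [1, 2]`, i.e. on `[1/s, 2/s]`, and inside
`(0, T]` this interval has length at most `min (2/s) T - 1/s ≤ T/2`; hence `v_T(b_s) ≥ 1/2`, with
equality when `2/s = T`. The other processes of `K` starting at the origin cost no less: `a_ω`
with `x = 0` costs `1` throughout, and `b_s ⋄_τ a_{b_s(τ)}` follows `b_s` up to time `τ` and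
pays `1` afterwards, because `r > 0` there.
-/

section TimeAverage

variable {Ω : Type*} {g : Ω → ℝ} {T : ℝ}

theorem timeAvg_mono {z z' : ℝ → Ω} (hT : 0 ≤ T) (hz : IntegrableOn (g ∘ z) (Ioc 0 T))
    (hz' : IntegrableOn (g ∘ z') (Ioc 0 T)) (h : ∀ t ∈ Ioc 0 T, g (z t) ≤ g (z' t)) :
    timeAvg g T z ≤ timeAvg g T z' :=
  mul_le_mul_of_nonneg_left (setIntegral_mono_on hz hz' measurableSet_Ioc h) (by positivity)

theorem timeAvg_eq_one_of_forall {z : ℝ → Ω} (hT : 0 < T) (h : ∀ t ∈ Ioc 0 T, g (z t) = 1) :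
    timeAvg g T z = 1 := by
  rw [timeAvg, setIntegral_congr_fun measurableSet_Ioc h, setIntegral_const, smul_eq_mul,
    mul_one, Real.volume_real_Ioc_of_le hT.le, sub_zero, one_div_mul_cancel hT.ne']

end TimeAverage

theorem setIntegral_Ioc_one_sub_indicator {E : Set ℝ} (hE : MeasurableSet E) {T : ℝ}
    (hT : 0 ≤ T) :
    ∫ t in Ioc 0 T, (1 - E.indicator 1 t) = T - volume.real (E ∩ Ioc 0 T) := by
  have hint : IntegrableOn (E.indicator (1 : ℝ → ℝ)) (Ioc 0 T) :=
    (integrableOn_const measure_Ioc_lt_top.ne).indicator hE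
  rw [integral_sub (integrable_const 1) hint, setIntegral_const, integral_indicator_one hE,
    measureReal_restrict_apply hE, Real.volume_real_Ioc_of_le hT, smul_eq_mul, mul_one, sub_zero]

theorem volume_real_Icc_two_mul_inter_Iic_le (a : ℝ) {T : ℝ} (hT : 0 ≤ T) :
    volume.real (Icc a (2 * a) ∩ Iic T) ≤ T / 2 := by
  have hmin : Icc a (2 * a) ∩ Iic T = Icc a (min (2 * a) T) := by
    ext t; simp [and_assoc]
  rw [hmin, Real.volume_real_Icc]
  have := min_le_left (2 * a) T
  have := min_le_right (2 * a) T
  exact max_le (by linarith) (by linarith)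

theorem Measurable.concat {Ω : Type*} [MeasurableSpace Ω] {z z' : ℝ → Ω} (hz : Measurable z)
    (hz' : Measurable z') (h : ℝ) : Measurable (concat z z' h) :=
  hz.ite measurableSet_Iio (hz'.comp (measurable_id.sub_const h))

theorem continuous_aproc (ω : ℝ × ℝ × ℝ) : Continuous (aproc ω) := by
  unfold aproc; fun_prop

theorem continuous_bproc (s : ℝ) : Continuous (bproc s) := by
  unfold bproc; fun_prop

theorem gex_le_one (p : ℝ × ℝ × ℝ) : gex p ≤ 1 := by
  unfold gex; split_ifs <;> norm_num

theorem norm_gex_le_one (p : ℝ × ℝ × ℝ) : ‖gex p‖ ≤ 1 := by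
  unfold gex; split_ifs <;> norm_num

theorem measurable_gex : Measurable gex :=
  measurable_const.ite ((measurableSet_Icc.preimage measurable_fst).inter
    ((measurableSet_singleton 0).preimage measurable_snd.snd)) measurable_const

theorem integrableOn_gex_comp {z : ℝ → ℝ × ℝ × ℝ} (hz : Measurable z) (T : ℝ) :
    IntegrableOn (gex ∘ z) (Ioc 0 T) :=
  Measure.integrableOn_of_bounded measure_Ioc_lt_top.ne
    (measurable_gex.comp hz).aestronglyMeasurable (ae_of_all _ fun t => norm_gex_le_one (z t))

theorem gex_bproc (s t : ℝ) : gex (bproc s t) = 1 - ((s * ·) ⁻¹' Icc 1 2).indicator 1 t := by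
  by_cases h : s * t ∈ Icc (1 : ℝ) 2 <;> simp [gex, bproc, h]

theorem timeAvg_gex_bproc (s : ℝ) {T : ℝ} (hT : 0 < T) :
    timeAvg gex T (bproc s) = 1 - volume.real ((s * ·) ⁻¹' Icc 1 2 ∩ Ioc 0 T) / T := by
  simp only [timeAvg, gex_bproc]
  rw [setIntegral_Ioc_one_sub_indicator (measurableSet_Icc.preimage (measurable_const_mul s))
    hT.le]
  field_simp

theorem volume_real_preimage_const_mul_Icc_inter_Ioc_le {s : ℝ} (hs : 0 ≤ s) {T : ℝ} (hT : 0 ≤ T) :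
    volume.real ((s * ·) ⁻¹' Icc 1 2 ∩ Ioc 0 T) ≤ T / 2 := by
  rcases hs.eq_or_lt with rfl | hs
  · simpa using div_nonneg hT zero_le_two
  rw [preimage_const_mul_Icc₀ _ _ hs, show 2 / s = 2 * (1 / s) by ring]
  calc volume.real (Icc (1 / s) (2 * (1 / s)) ∩ Ioc 0 T)
      ≤ volume.real (Icc (1 / s) (2 * (1 / s)) ∩ Iic T) :=
        measureReal_mono (inter_subset_inter_right _ Ioc_subset_Iic_self)
          ((measure_mono inter_subset_left).trans_lt measure_Icc_lt_top).ne
    _ ≤ T / 2 := volume_real_Icc_two_mul_inter_Iic_le _ hT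

theorem one_half_le_timeAvg_gex_bproc {s : ℝ} (hs : 0 ≤ s) {T : ℝ} (hT : 0 < T) :
    1 / 2 ≤ timeAvg gex T (bproc s) := by
  rw [timeAvg_gex_bproc s hT, le_sub_comm, div_le_iff₀ hT]
  linarith [volume_real_preimage_const_mul_Icc_inter_Ioc_le hs hT.le]

theorem timeAvg_gex_bproc_two_div {T : ℝ} (hT : 0 < T) :
    timeAvg gex T (bproc (2 / T)) = 1 / 2 := by
  have hzero : (2 / T * ·) ⁻¹' Icc 1 2 ∩ Ioc 0 T = Icc (T / 2) T := by
    rw [preimage_const_mul_Icc₀ _ _ (by positivity), one_div_div, div_div_cancel₀ two_ne_zero,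
      inter_eq_left]
    exact fun t ht => ⟨by linarith [ht.1], ht.2⟩
  rw [timeAvg_gex_bproc _ hT, hzero, Real.volume_real_Icc_of_le (by linarith)]
  field_simp
  ring

theorem gex_bproc_le_gex_concat (s τ t : ℝ) :
    gex (bproc s t) ≤ gex (concat (bproc s) (aproc (bproc s τ)) τ t) := by
  unfold concat
  split_ifs with h
  · exact le_rfl
  rcases (not_lt.1 h).eq_or_lt with rfl | hτt
  · simp [aproc, bproc]
  · have hleave : gex (aproc (bproc s τ) (t - τ)) = 1 :=
      if_neg fun hc => by simp only [aproc, bproc, add_zero] at hc; linarith [hc.2]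
    rw [hleave]
    exact gex_le_one _

theorem timeAvg_gex_aproc {ω : ℝ × ℝ × ℝ} (hω : ω.1 ∉ Icc 1 2) {T : ℝ} (hT : 0 < T) :
    timeAvg gex T (aproc ω) = 1 :=
  timeAvg_eq_one_of_forall hT fun _ _ => if_neg fun h => hω h.1

theorem one_half_le_timeAvg_gex_of_mem_Kex {T : ℝ} (hT : 0 < T) {z : ℝ → ℝ × ℝ × ℝ}
    (hz : z ∈ Kex) (hz0 : z 0 = (0, 0, 0)) : 1 / 2 ≤ timeAvg gex T z := by
  rcases hz with (⟨ω, -, rfl⟩ | ⟨s, hs, rfl⟩) | ⟨s, hs, τ, -, rfl⟩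
  · have hω : ω.1 = 0 := by simpa [aproc] using congrArg Prod.fst hz0
    rw [timeAvg_gex_aproc (by simp [hω]) hT]
    norm_num
  · exact one_half_le_timeAvg_gex_bproc hs hT
  · have hb := (continuous_bproc s).measurable
    exact (one_half_le_timeAvg_gex_bproc hs hT).trans <|
      timeAvg_mono hT.le (integrableOn_gex_comp hb T)
        (integrableOn_gex_comp (hb.concat (continuous_aproc _).measurable τ) T)
        fun t _ => gex_bproc_le_gex_concat s τ t

/-- In the example, for every `T > 0` one has `v_T(b_s) ≥ 1/2` for all `s > 0`,
with equality at `s = 2/T`; consequently `inf_{s>0} v_T(b_s) = 1/2` and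
`V[v_T](0,0,0) = 1/2`. -/
theorem val_time_origin (T : ℝ) (hT : 0 < T) :
    (∀ s : ℝ, 0 < s → 1 / 2 ≤ timeAvg gex T (bproc s)) ∧
    timeAvg gex T (bproc (2 / T)) = 1 / 2 ∧
    sInf ((fun s => timeAvg gex T (bproc s)) '' Ioi (0 : ℝ)) = 1 / 2 ∧
    Val Kex (timeAvg gex T) (0, 0, 0) = 1 / 2 := by
  have hopt := timeAvg_gex_bproc_two_div hT
  have hpos : 0 < 2 / T := by positivity
  refine ⟨fun s hs => one_half_le_timeAvg_gex_bproc hs.le hT, hopt, ?_, ?_⟩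
  · refine IsLeast.csInf_eq ⟨⟨2 / T, hpos, hopt⟩, ?_⟩
    rintro _ ⟨s, hs, rfl⟩
    exact one_half_le_timeAvg_gex_bproc hs.le hT
  · have hmem : bproc (2 / T) ∈ Kex := Or.inl (Or.inr ⟨2 / T, hpos.le, rfl⟩)
    refine IsLeast.csInf_eq ⟨⟨bproc (2 / T), ⟨hmem, by simp [bproc]⟩, hopt⟩, ?_⟩
    rintro _ ⟨z, ⟨hz, hz0⟩, rfl⟩
    exact one_half_le_timeAvg_gex_of_mem_Kex hT hz hz0
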